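/- arXiv:cs/0505048 — 4 statements merged into one kernel-verified Lean document; each statement's English description precedes it below -/
import Mathlib

section
/- Let n, d be positive integers with d < n, and let p_1^{e_1}, ..., p_k^{e_k} be powers of distinct primes whose product is at least n^d. Suppose D is a set of at most d 'defective' indices in {0,...,n-1}, and i is an index in {0,...,n-1} such that for every j in {1,...,k}, there exists some defective i' in D with i' ≡ i (mod p_j^{e_j}). Then i is itself defective (i ∈ D). -/
/-- Chinese Remainder Sieve correctness: if every prime-power test that includes
index `i` is positive (i.e. contains a defective index congruent to `i`),
then `i` is itself defective. -/
theorem chinese_remainder_sieve_correct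
    (n d k : ℕ) (hd : 0 < d) (hdn : d < n)
    (p e : Fin k → ℕ) (hp : ∀ j, (p j).Prime) (hinj : Function.Injective p)
    (he : ∀ j, 0 < e j)
    (hprod : n ^ d ≤ ∏ j, p j ^ e j)
    (D : Finset ℕ) (hDsub : ∀ x ∈ D, x < n) (hDcard : D.card ≤ d)
    (i : ℕ) (hi : i < n)
    (htests : ∀ j, ∃ i' ∈ D, i' ≡ i [MOD p j ^ e j]) :
    i ∈ D := by
  by_contra hiD
  choose f hfD hfmod using htests
  -- group the product by fibers of f over D
  have hgroup : ∏ x ∈ D, ∏ j ∈ Finset.univ.filter (fun j => f j = x), p j ^ e j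
      = ∏ j, p j ^ e j :=
    Finset.prod_fiberwise_of_maps_to (fun j _ => hfD j) _
  -- each fiber product divides |x - i| hence is ≤ n - 1
  have key : ∀ x ∈ D, ∏ j ∈ Finset.univ.filter (fun j => f j = x), p j ^ e j ≤ n - 1 := by
    intro x hx
    have hdvd : (∏ j ∈ Finset.univ.filter (fun j => f j = x), (p j : ℤ) ^ e j) ∣ ((i : ℤ) - x) := by
      apply Finset.prod_dvd_of_coprime
      · intro a ha b hb hab
        have : Nat.Coprime (p a ^ e a) (p b ^ e b) :=
          Nat.Coprime.pow _ _ ((Nat.coprime_primes (hp a) (hp b)).2 (fun h => hab (hinj h)))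
        have := Nat.isCoprime_iff_coprime.2 this
        simpa using this
      · intro j hj
        simp only [Finset.mem_filter] at hj
        have := (hfmod j).dvd
        rw [hj.2] at this
        simpa using this
    have hxi : (i : ℤ) - x ≠ 0 := by
      intro h
      apply hiD
      have : (x : ℤ) = i := by omega
      rwa [show x = i by exact_mod_cast this] at hx
    have hle : (∏ j ∈ Finset.univ.filter (fun j => f j = x), (p j : ℤ) ^ e j) ≤ |(i : ℤ) - x| := by
      apply Int.le_of_dvd (abs_pos.2 hxi)
      exact (dvd_abs _ _).2 hdvd
    have habs : |(i : ℤ) - x| ≤ (n : ℤ) - 1 := by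
      have := hDsub x hx
      rw [abs_le]; omega
    have : (∏ j ∈ Finset.univ.filter (fun j => f j = x), (p j : ℤ) ^ e j)
        = ((∏ j ∈ Finset.univ.filter (fun j => f j = x), p j ^ e j : ℕ) : ℤ) := by
      push_cast; ring
    omega
  have hbound : ∏ j, p j ^ e j ≤ (n - 1) ^ D.card := by
    rw [← hgroup]
    exact Finset.prod_le_pow_card _ _ _ key
  have h1 : (n - 1) ^ D.card ≤ (n - 1) ^ d := Nat.pow_le_pow_right (by omega) hDcard
  have h2 : (n - 1) ^ d < n ^ d := Nat.pow_lt_pow_left (by omega) (by omega)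
  omega
end

section
/- Fix n items, at most d defective, and construct a random 2t×n Boolean matrix M by independently selecting, for each column, a uniformly random set of t/d of the 2t rows to be 1 (d divides t). For a fixed set D of d defective columns and a fixed non-defective column i, the probability that column i is NOT distinguishable from D (i.e., every row with a 1 in column i also has a 1 in some column of D) is at most 2^{-t/d}. -/
lemma desc_ineq : ∀ (k t : ℕ), k ≤ t →
    2 ^ k * t.descFactorial k ≤ (2 * t).descFactorial k := by
  intro k
  induction k with
  | zero => intro t _; simp
  | succ k ih =>
    intro t hk
    rw [Nat.descFactorial_succ, Nat.descFactorial_succ, pow_succ]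
    have h1 := ih t (Nat.le_of_succ_le hk)
    have h2 : 2 * (t - k) ≤ 2 * t - k := by omega
    calc 2 ^ k * 2 * ((t - k) * t.descFactorial k)
        = (2 * (t - k)) * (2 ^ k * t.descFactorial k) := by ring
      _ ≤ (2 * t - k) * ((2 * t).descFactorial k) :=
        Nat.mul_le_mul h2 h1

lemma choose_ineq (k t : ℕ) (hk : k ≤ t) :
    2 ^ k * t.choose k ≤ (2 * t).choose k := by
  have h := desc_ineq k t hk
  rw [Nat.descFactorial_eq_factorial_mul_choose, Nat.descFactorial_eq_factorial_mul_choose] at h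
  have : Nat.factorial k * (2 ^ k * t.choose k) ≤ Nat.factorial k * ((2 * t).choose k) := by
    calc Nat.factorial k * (2 ^ k * t.choose k) = 2 ^ k * (Nat.factorial k * t.choose k) := by ring
      _ ≤ _ := h
  exact Nat.le_of_mul_le_mul_left this (Nat.factorial_pos k)

/-- Sample-injection: each column picks `t/d` of the `2t` rows uniformly at random.
Given fixed defective columns `D` (of size `d`, each occupying `t/d` rows), the
probability that a fixed non-defective column's random choice of `t/d` rows lies
entirely within the rows occupied by `D` (i.e. the column is not distinguishable
from `D`) is at most `2^{-t/d}`. -/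
theorem sample_injection_indistinguishable_prob
    (t d n : ℕ) (ht : 0 < t) (hd : 0 < d) (hdt : d ∣ t)
    (D : Finset (Fin n)) (hD : D.card = d)
    (cols : Fin n → Finset (Fin (2 * t))) (hcols : ∀ i, (cols i).card = t / d) :
    ((((Finset.univ : Finset (Fin (2 * t))).powersetCard (t / d)).filter
        (fun s => s ⊆ D.biUnion cols)).card : ℝ) /
      ((((Finset.univ : Finset (Fin (2 * t))).powersetCard (t / d)).card : ℝ))
      ≤ (1 / 2 : ℝ) ^ (t / d) := by
  set k := t / d with hk
  have hkt : k ≤ t := Nat.div_le_self t d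
  set B := D.biUnion cols with hB
  -- card of B ≤ t
  have hBcard : B.card ≤ t := by
    calc B.card ≤ ∑ i ∈ D, (cols i).card := Finset.card_biUnion_le
      _ = d * k := by simp [hcols, hD, Finset.sum_const, mul_comm]
      _ = t := Nat.mul_div_cancel' hdt
  -- filter = B.powersetCard k
  have hfilter : (((Finset.univ : Finset (Fin (2 * t))).powersetCard k).filter
      (fun s => s ⊆ B)) = B.powersetCard k := by
    ext s
    simp [Finset.mem_powersetCard, Finset.mem_filter, and_comm]
  have hnum : (((Finset.univ : Finset (Fin (2 * t))).powersetCard k).filter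
      (fun s => s ⊆ B)).card = B.card.choose k := by
    rw [hfilter, Finset.card_powersetCard]
  have hden : ((Finset.univ : Finset (Fin (2 * t))).powersetCard k).card
      = (2 * t).choose k := by
    rw [Finset.card_powersetCard, Finset.card_univ, Fintype.card_fin]
  rw [hnum, hden]
  have hpos : (0 : ℝ) < ((2 * t).choose k : ℝ) := by
    exact_mod_cast Nat.choose_pos (by omega : k ≤ 2 * t)
  rw [div_le_iff₀ hpos]
  have key : 2 ^ k * B.card.choose k ≤ (2 * t).choose k :=
    le_trans (Nat.mul_le_mul_left _ (Nat.choose_le_choose k hBcard)) (choose_ineq k t hkt)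
  have : (2 : ℝ) ^ k * (B.card.choose k : ℝ) ≤ ((2 * t).choose k : ℝ) := by
    exact_mod_cast key
  rw [div_pow, one_pow]
  rw [div_mul_eq_mul_div, le_div_iff₀ (by positivity)]
  linarith
end

section
/- Let D, E, F be three distinct binary strings of length q (the defectives). Define test2(p,p') as the number of distinct ordered pairs (X_p, X_{p'}) over X ∈ {D,E,F}, and let P be the set of positions p where not all of D_p, E_p, F_p agree. Then there exist positions p₁, p₂ ∈ P with test2(p₁,p₂) = 3. -/
/-- For three distinct binary defectives `D, E, F`, there exist positions `p₁, p₂`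
(at each of which not all three digits agree) such that the defectives realize
exactly three distinct ordered pairs of digit values at `(p₁, p₂)`, i.e.
`test2(p₁, p₂) = 3`. -/
theorem three_defectives_test2_eq_three
    (q : ℕ) (D E F : Fin q → Bool)
    (hDE : D ≠ E) (hDF : D ≠ F) (hEF : E ≠ F) :
    ∃ p₁ p₂ : Fin q,
      ¬ (D p₁ = E p₁ ∧ E p₁ = F p₁) ∧
      ¬ (D p₂ = E p₂ ∧ E p₂ = F p₂) ∧
      ({(D p₁, D p₂), (E p₁, E p₂), (F p₁, F p₂)} : Finset (Bool × Bool)).card = 3 := by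
  obtain ⟨p₁, hp₁⟩ := Function.ne_iff.mp hDE
  have card3 : ∀ a b c : Bool × Bool, a ≠ b → a ≠ c → b ≠ c →
      ({a, b, c} : Finset (Bool × Bool)).card = 3 := by
    intro a b c hab hac hbc
    rw [Finset.card_insert_of_notMem (by simp [hab, hac]),
        Finset.card_insert_of_notMem (by simp [hbc]), Finset.card_singleton]
  by_cases hF : F p₁ = D p₁
  · obtain ⟨p₂, hp₂⟩ := Function.ne_iff.mp hDF
    refine ⟨p₁, p₂, by tauto, ?_, ?_⟩
    · intro ⟨h1, h2⟩
      cases D p₂ <;> cases E p₂ <;> simp_all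
    · refine card3 _ _ _ ?_ ?_ ?_
      · intro h; exact hp₁ (congrArg Prod.fst h)
      · intro h; exact hp₂ (congrArg Prod.snd h)
      · intro h
        have := congrArg Prod.fst h
        simp only at this
        rw [hF] at this; exact hp₁ this.symm
  · have hFE : F p₁ = E p₁ := by revert hp₁ hF; cases F p₁ <;> cases D p₁ <;> cases E p₁ <;> simp_all
    obtain ⟨p₂, hp₂⟩ := Function.ne_iff.mp hEF
    refine ⟨p₁, p₂, by tauto, ?_, ?_⟩
    · intro ⟨h1, h2⟩
      cases E p₂ <;> cases F p₂ <;> simp_all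
    · refine card3 _ _ _ ?_ ?_ ?_
      · intro h; exact hp₁ (congrArg Prod.fst h)
      · intro h
        have := congrArg Prod.fst h
        simp only at this
        rw [hFE] at this; exact hp₁ this
      · intro h; exact hp₂ (congrArg Prod.snd h)
end

section
/- Let M be the 2q(q-1)×n Boolean matrix for n = 2^q where rows are indexed by (p, p', v, v') with 0 ≤ p < p' < q and v, v' ∈ {0,1}, and M[(p,p',v,v'), X] = 1 iff the p-th binary digit of X is v and the p'-th binary digit is v'. Then M is 3̄-separable: for any two distinct subsets S, T ⊆ {0,...,n-1} each of size at most 3, the sets of positive rows induced by S and T differ. -/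
/-!
Suppose `x ∈ S \ T`. For `y ∈ T` the set `D y` of coordinates where `y` differs from `x` is
nonempty, and since every pattern of `x` on two coordinates occurs in `T`, no two coordinates
meet all the `D y`. With `|T| ≤ 3` this forces `T` to have three elements with pairwise disjoint
`D y`. Pick `c y ∈ D y`: the pattern of `y` on `c y` and another coordinate occurs in `S` at some
`z y`, and no element of `S` differs from `x` at two of the `c y`, since that pattern would have
to occur in `T`. So the `z y` are three distinct elements of `S` other than `x`, and `|S| ≥ 4`.
-/

open Finset Function

theorem Finset.exists_ne_subset_pair_of_card_le_two {ι : Type*} [DecidableEq ι] [Nontrivial ι]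
    {H : Finset ι} (hH : #H ≤ 2) : ∃ i j, i ≠ j ∧ H ⊆ {i, j} := by
  interval_cases h : #H
  · obtain ⟨i, j, hij⟩ := exists_pair_ne ι
    exact ⟨i, j, hij, by simp [card_eq_zero.mp h]⟩
  · obtain ⟨i, rfl⟩ := card_eq_one.mp h
    obtain ⟨j, hj⟩ := exists_ne i
    exact ⟨i, j, hj.symm, by simp⟩
  · obtain ⟨i, j, hij, rfl⟩ := card_eq_two.mp h
    exact ⟨i, j, hij, subset_rfl⟩

section Transversal

variable {α ι : Type*} {T : Finset α} {D : α → Set ι} {c : α → ι}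

theorem three_le_card_of_transversal (hc : ∀ y ∈ T, c y ∈ D y)
    (hmiss : ∀ H : Finset ι, (∀ y ∈ T, ∃ i ∈ H, i ∈ D y) → 3 ≤ #H) : 3 ≤ #T := by
  classical
  exact (hmiss (T.image c) fun y hy => ⟨c y, mem_image_of_mem c hy, hc y hy⟩).trans card_image_le

theorem pairwiseDisjoint_of_transversal (hT : #T ≤ 3) (hc : ∀ y ∈ T, c y ∈ D y)
    (hmiss : ∀ H : Finset ι, (∀ y ∈ T, ∃ i ∈ H, i ∈ D y) → 3 ≤ #H) :
    (T : Set α).PairwiseDisjoint D := by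
  classical
  intro y hy y' hy' hne
  refine Set.disjoint_left.mpr fun i hi hi' => ?_
  -- `i` together with the `c z` of the at most one remaining `z` would meet every `D z`
  have hcard := hmiss (insert i (((T.erase y).erase y').image c)) fun z hz => by
    by_cases hzy : z = y
    · exact ⟨i, mem_insert_self _ _, hzy ▸ hi⟩
    by_cases hzy' : z = y'
    · exact ⟨i, mem_insert_self _ _, hzy' ▸ hi'⟩
    exact ⟨c z, mem_insert_of_mem (mem_image_of_mem c (by simp [*])), hc z hz⟩
  have hrest : #((T.erase y).erase y') = #T - 2 := by
    rw [card_erase_of_mem (mem_erase.mpr ⟨Ne.symm hne, hy'⟩), card_erase_of_mem hy]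
    omega
  have := (card_insert_le i _).trans
    (Nat.add_le_add_right (card_image_le (s := (T.erase y).erase y') (f := c)) 1)
  omega

end Transversal

section PairCovered

variable {α ι β : Type*} (w : α → ι → β)

/-- Every row of the pair-test matrix of the encoding `w` that is positive for `S` is positive
for `T`. -/
def PairCovered (S T : Finset α) : Prop :=
  ∀ x ∈ S, ∀ i j, i ≠ j → ∃ y ∈ T, w y i = w x i ∧ w y j = w x j

variable {w} {S T : Finset α}

theorem pairCovered_of_forall_lt [LinearOrder ι]
    (h : ∀ i j, i < j → ∀ v v', (∃ x ∈ S, w x i = v ∧ w x j = v') →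
      ∃ y ∈ T, w y i = v ∧ w y j = v') :
    PairCovered w S T := by
  intro x hx i j hij
  rcases hij.lt_or_gt with hlt | hgt
  · exact h i j hlt _ _ ⟨x, hx, rfl, rfl⟩
  · obtain ⟨y, hy, hj, hi⟩ := h j i hgt _ _ ⟨x, hx, rfl, rfl⟩
    exact ⟨y, hy, hi, hj⟩

theorem PairCovered.three_le_of_transversal [Nontrivial ι] {x : α} (hST : PairCovered w S T)
    (hx : x ∈ S) {H : Finset ι} (hH : ∀ y ∈ T, ∃ i ∈ H, w y i ≠ w x i) : 3 ≤ #H := by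
  classical
  by_contra! h
  obtain ⟨i, j, hij, hHij⟩ := exists_ne_subset_pair_of_card_le_two (Nat.le_of_lt_succ h)
  obtain ⟨y, hy, hyi, hyj⟩ := hST x hx i j hij
  obtain ⟨k, hk, hyk⟩ := hH y hy
  rcases mem_insert.mp (hHij hk) with rfl | hk
  · exact hyk hyi
  · exact hyk (mem_singleton.mp hk ▸ hyj)

theorem PairCovered.eq_of_ne_of_ne (hST : PairCovered w S T) {x z : α} (hz : z ∈ S)
    (hdisj : (T : Set α).PairwiseDisjoint fun y => {i | w y i ≠ w x i})
    {y y' : α} (hy : y ∈ T) (hy' : y' ∈ T) {i j : ι}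
    (hyi : w y i ≠ w x i) (hy'j : w y' j ≠ w x j) (hzi : w z i ≠ w x i) (hzj : w z j ≠ w x j) :
    y = y' := by
  by_cases hij : i = j
  · exact hdisj.elim_set hy hy' i hyi (hij ▸ hy'j)
  obtain ⟨u, hu, hui, huj⟩ := hST z hz i j hij
  have hyu : y = u := hdisj.elim_set hy hu i hyi (by simpa [hui] using hzi)
  have hy'u : y' = u := hdisj.elim_set hy' hu j hy'j (by simpa [huj] using hzj)
  rw [hyu, hy'u]

theorem PairCovered.subset_of_card_le_three [Nontrivial ι] (hw : Injective w)
    (hST : PairCovered w S T) (hTS : PairCovered w T S) (hS : #S ≤ 3) (hT : #T ≤ 3) :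
    S ⊆ T := by
  classical
  intro x hx
  by_contra hxT
  have hdiff : ∀ y ∈ T, ∃ i, w y i ≠ w x i := fun y hy => by
    by_contra! h
    exact hxT (hw (funext h) ▸ hy)
  choose! c hc using hdiff
  have hmiss := fun H => hST.three_le_of_transversal (H := H) hx
  have h3 : 3 ≤ #T := three_le_card_of_transversal (D := fun y => {i | w y i ≠ w x i}) hc hmiss
  have hdisj := pairwiseDisjoint_of_transversal (D := fun y => {i | w y i ≠ w x i}) hT hc hmiss
  have hz : ∀ y ∈ T, ∃ z ∈ S, w z (c y) = w y (c y) := fun y hy => by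
    obtain ⟨j, hj⟩ := exists_ne (c y)
    obtain ⟨z, hz, hzc, -⟩ := hTS y hy (c y) j hj.symm
    exact ⟨z, hz, hzc⟩
  choose! z hzS hzc using hz
  have hzx : ∀ y ∈ T, w (z y) (c y) ≠ w x (c y) := fun y hy => hzc y hy ▸ hc y hy
  have hinj : Set.InjOn z T := fun y hy y' hy' he =>
    hST.eq_of_ne_of_ne (hzS y hy) hdisj hy hy' (hc y hy) (hc y' hy') (hzx y hy)
      (he ▸ hzx y' hy')
  have hxz : x ∉ T.image z := by
    simp only [mem_image, not_exists, not_and]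
    exact fun y hy he => hzx y hy (by rw [he])
  have hsub : insert x (T.image z) ⊆ S :=
    insert_subset hx (image_subset_iff.mpr hzS)
  have := card_le_card hsub
  rw [card_insert_of_notMem hxz, card_image_of_injOn hinj] at this
  omega

end PairCovered

theorem Fin.testBit_injective (q : ℕ) :
    Injective fun (X : Fin (2 ^ q)) (i : Fin q) => Nat.testBit X i := by
  intro X Y h
  refine Fin.ext (Nat.eq_of_testBit_eq fun i => ?_)
  by_cases hi : i < q
  · exact congrFun h ⟨i, hi⟩
  · have hle : 2 ^ q ≤ 2 ^ i := Nat.pow_le_pow_right two_pos (not_lt.mp hi)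
    rw [Nat.testBit_lt_two_pow (X.isLt.trans_le hle), Nat.testBit_lt_two_pow (Y.isLt.trans_le hle)]

/-- The pair-test matrix for `n = 2^q` (rows indexed by positions `p < p'` and values
`v, v'`, testing items whose `p`-th binary digit is `v` and `p'`-th digit is `v'`)
is `3̄`-separable: distinct subsets of items of size at most `3` induce distinct sets
of positive rows. -/
theorem pair_test_matrix_three_separable
    (q : ℕ) (hq : 2 ≤ q) (S T : Finset (Fin (2 ^ q)))
    (hS : S.card ≤ 3) (hT : T.card ≤ 3) (hST : S ≠ T) :
    ¬ ∀ (p p' : Fin q), p < p' → ∀ v v' : Bool,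
        ((∃ X ∈ S, Nat.testBit X p = v ∧ Nat.testBit X p' = v') ↔
         (∃ X ∈ T, Nat.testBit X p = v ∧ Nat.testBit X p' = v')) := by
  intro H
  have : Nontrivial (Fin q) := Fin.nontrivial_iff_two_le.mpr hq
  have hST' : PairCovered (fun (X : Fin (2 ^ q)) (i : Fin q) => Nat.testBit X i) S T :=
    pairCovered_of_forall_lt fun p p' h v v' => (H p p' h v v').mp
  have hTS' : PairCovered (fun (X : Fin (2 ^ q)) (i : Fin q) => Nat.testBit X i) T S :=
    pairCovered_of_forall_lt fun p p' h v v' => (H p p' h v v').mpr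
  have hw := Fin.testBit_injective q
  exact hST ((hST'.subset_of_card_le_three hw hTS' hS hT).antisymm
    (hTS'.subset_of_card_le_three hw hST' hT hS))
end
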